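/- Let (λ₁,λ₂,λ₃) ∈ ℝ³ be nonzero, and consider the half-flat binary cubic p = λ₁u₁³ + λ₂(u₁²u₂ + u₂³) + λ₃u₁u₂². Then there exists s ∈ ℝ such that the binary cubic (1/3)u₁³ − u₁u₂² + s·p, i.e. the cubic with coefficient vector (1/3 + sλ₁, sλ₂, −1 + sλ₃, sλ₂), has vanishing discriminant Δ₃ = 0, equivalently has a root of multiplicity greater than one. -/

import Mathlib

noncomputable section

/-- The discriminant of a binary cubic `q 0 • u₁³ + q 1 • u₁²u₂ + q 2 • u₁u₂² + q 3 • u₂³`. -/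
def disc3 (q : Fin 4 → ℝ) : ℝ :=
  q 1 ^ 2 * q 2 ^ 2 - 4 * q 0 * q 2 ^ 3 - 4 * q 1 ^ 3 * q 3 +
    18 * q 0 * q 1 * q 2 * q 3 - 27 * q 0 ^ 2 * q 3 ^ 2

/-!
A cubic `c + s • p` has a repeated root at `u₁/u₂ = x` iff `c(x) + s p(x) = 0` and
`c'(x) + s p'(x) = 0`; such an `s` exists as soon as the Wronskian `c p' - c' p` vanishes at
`x` and `(p(x), p'(x)) ≠ 0`. For `c = (1/3)u₁³ − u₁u₂²` and half-flat `p` with `λ₂ ≠ 0`, the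
Wronskian is `-λ₂/3 · (x⁴ + k x³ + 6x² − 3)` with `k = (6λ₁ + 2λ₃)/λ₂`, which has a negative
and a positive root. A nonzero cubic cannot have repeated roots at two distinct points, so one
of these two roots works. When `λ₂ = 0` the discriminant along the line is `-4 q₀ q₂³` and one
kills `q₀` or `q₂`.
-/

namespace BinaryCubic

/-- The dehomogenised cubic `q(x, 1)`. -/
def eval (q : Fin 4 → ℝ) (x : ℝ) : ℝ := q 0 * x ^ 3 + q 1 * x ^ 2 + q 2 * x + q 3

def derivEval (q : Fin 4 → ℝ) (x : ℝ) : ℝ := 3 * q 0 * x ^ 2 + 2 * q 1 * x + q 2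

def wronskian (c p : Fin 4 → ℝ) (x : ℝ) : ℝ :=
  eval c x * derivEval p x - derivEval c x * eval p x

lemma eval_add_smul (c p : Fin 4 → ℝ) (s x : ℝ) :
    eval (c + s • p) x = eval c x + s * eval p x := by
  simp only [eval, Pi.add_apply, Pi.smul_apply, smul_eq_mul]; ring

lemma derivEval_add_smul (c p : Fin 4 → ℝ) (s x : ℝ) :
    derivEval (c + s • p) x = derivEval c x + s * derivEval p x := by
  simp only [derivEval, Pi.add_apply, Pi.smul_apply, smul_eq_mul]; ring

lemma disc3_eq_zero_of_double_root {q : Fin 4 → ℝ} {x : ℝ} (h : eval q x = 0)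
    (h' : derivEval q x = 0) : disc3 q = 0 := by
  unfold eval at h
  unfold derivEval at h'
  unfold disc3
  rcases eq_or_ne (q 0) 0 with h0 | h0
  · rw [h0] at h h' ⊢
    linear_combination (-4 * q 1 ^ 3) * h + (q 1 ^ 2 * (2 * q 1 * x + q 2)) * h'
  · -- eliminate `x` through the remainder of `q` modulo `q'`, which is linear in `x`
    set A := 6 * q 0 * q 2 - 2 * q 1 ^ 2
    set B := 9 * q 0 * q 3 - q 1 * q 2
    have hrem : A * x + B = 0 := by linear_combination 9 * q 0 * h - (3 * q 0 * x + q 1) * h'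
    have hres : 3 * q 0 * B ^ 2 - 2 * q 1 * A * B + q 2 * A ^ 2 = 0 := by
      linear_combination A ^ 2 * h' + (3 * q 0 * (B - A * x) - 2 * q 1 * A) * hrem
    refine (mul_eq_zero.mp ?_).resolve_left h0
    linear_combination (-1 / 9 : ℝ) * hres

lemma exists_disc3_add_smul_eq_zero {c p : Fin 4 → ℝ} {x : ℝ}
    (hW : wronskian c p x = 0) (hp : ¬(eval p x = 0 ∧ derivEval p x = 0)) :
    ∃ s : ℝ, disc3 (c + s • p) = 0 := by
  have hN : eval p x ^ 2 + derivEval p x ^ 2 ≠ 0 := by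
    contrapose! hp
    constructor <;> nlinarith [sq_nonneg (eval p x), sq_nonneg (derivEval p x)]
  -- `(c, c')` is parallel to `(p, p')`; project it onto that line
  refine ⟨-(eval c x * eval p x + derivEval c x * derivEval p x) /
    (eval p x ^ 2 + derivEval p x ^ 2), disc3_eq_zero_of_double_root (x := x) ?_ ?_⟩
  all_goals unfold wronskian at hW
  · rw [eval_add_smul]; field_simp; linear_combination derivEval p x * hW
  · rw [derivEval_add_smul]; field_simp; linear_combination -eval p x * hW

end BinaryCubic

open BinaryCubic

lemma exists_pos_root_quartic (k : ℝ) : ∃ x > 0, x ^ 4 + k * x ^ 3 + 6 * x ^ 2 - 3 = 0 := by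
  set f : ℝ → ℝ := fun x => x ^ 4 + k * x ^ 3 + 6 * x ^ 2 - 3
  have hM : (0 : ℝ) ≤ |k| + 1 := by positivity
  have hfM : 0 ≤ f (|k| + 1) := by
    have : 1 ≤ |k| + 1 + k := by linarith [neg_abs_le k]
    have : (|k| + 1) ^ 3 * 1 ≤ (|k| + 1) ^ 3 * (|k| + 1 + k) := by gcongr
    nlinarith [one_le_pow₀ (n := 2) (le_add_of_nonneg_left (abs_nonneg k))]
  obtain ⟨x, hx, hfx⟩ := intermediate_value_Icc hM (by fun_prop : Continuous f).continuousOn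
    ⟨by norm_num [f], hfM⟩
  refine ⟨x, lt_of_le_of_ne hx.1 ?_, hfx⟩
  rintro rfl
  norm_num [f] at hfx

lemma wronskian_halfFlat (l1 l2 l3 x : ℝ) :
    wronskian ![1 / 3, 0, -1, 0] ![l1, l2, l3, l2] x =
      -(l2 * x ^ 4 + (6 * l1 + 2 * l3) * x ^ 3 + 6 * l2 * x ^ 2 - 3 * l2) / 3 := by
  simp [wronskian, eval, derivEval]; ring

lemma exists_neg_pos_wronskian_root (l1 l2 l3 : ℝ) (hl2 : l2 ≠ 0) :
    ∃ a < 0, ∃ b > 0, wronskian ![1 / 3, 0, -1, 0] ![l1, l2, l3, l2] a = 0 ∧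
      wronskian ![1 / 3, 0, -1, 0] ![l1, l2, l3, l2] b = 0 := by
  have hroot : ∀ x, x ^ 4 + (6 * l1 + 2 * l3) / l2 * x ^ 3 + 6 * x ^ 2 - 3 = 0 →
      wronskian ![1 / 3, 0, -1, 0] ![l1, l2, l3, l2] x = 0 := by
    intro x hx
    rw [wronskian_halfFlat]
    field_simp at hx
    linear_combination -hx / 3
  obtain ⟨a, ha, hga⟩ := exists_pos_root_quartic (-((6 * l1 + 2 * l3) / l2))
  obtain ⟨b, hb, hgb⟩ := exists_pos_root_quartic ((6 * l1 + 2 * l3) / l2)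
  exact ⟨-a, neg_neg_of_pos ha, b, hb, hroot _ (by linear_combination hga), hroot _ hgb⟩

lemma halfFlat_l2_eq_zero_of_double_roots {l1 l2 l3 a b : ℝ} (hab : a ≠ b)
    (ha : eval ![l1, l2, l3, l2] a = 0 ∧ derivEval ![l1, l2, l3, l2] a = 0)
    (hb : eval ![l1, l2, l3, l2] b = 0 ∧ derivEval ![l1, l2, l3, l2] b = 0) : l2 = 0 := by
  obtain ⟨e1, e2⟩ := ha
  obtain ⟨e3, e4⟩ := hb
  simp only [eval, derivEval, Matrix.cons_val] at e1 e2 e3 e4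
  have hab' : a - b ≠ 0 := sub_ne_zero.mpr hab
  have hderiv : 3 * l1 * (a + b) + 2 * l2 = 0 :=
    (mul_eq_zero.mp (by linear_combination e2 - e4 : (a - b) * _ = 0)).resolve_left hab'
  have hval : l2 * (a + b) + 2 * l3 = 0 :=
    (mul_eq_zero.mp (by linear_combination 3 * e1 - a * e2 - 3 * e3 + b * e4 :
      (a - b) * _ = 0)).resolve_left hab'
  have hl2 : (a - b) ^ 2 * l2 = 0 := by
    linear_combination (a + b) * hval - 2 * (a + b) * e2 + 2 * a ^ 2 * hderiv
  exact (mul_eq_zero.mp hl2).resolve_left (pow_ne_zero 2 hab')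

lemma disc3_of_coeff_one_three_zero (q0 q2 : ℝ) : disc3 ![q0, 0, q2, 0] = -4 * q0 * q2 ^ 3 := by
  simp [disc3]

/-- For a nonzero half-flat cubic `p = λ₁u₁³ + λ₂(u₁²u₂ + u₂³) + λ₃u₁u₂²`, the affine line
through `(1/3)u₁³ − u₁u₂²` in direction `p` meets the discriminant-zero locus. -/
theorem stmt19 (l1 l2 l3 : ℝ) (h : ¬(l1 = 0 ∧ l2 = 0 ∧ l3 = 0)) :
    ∃ s : ℝ, disc3 ![1 / 3 + s * l1, s * l2, -1 + s * l3, s * l2] = 0 := by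
  rcases eq_or_ne l2 0 with rfl | hl2
  · simp only [mul_zero, disc3_of_coeff_one_three_zero]
    by_cases hl1 : l1 = 0
    · have hl3 : l3 ≠ 0 := fun hl3 => h ⟨hl1, rfl, hl3⟩
      exact ⟨1 / l3, by field_simp; ring⟩
    · exact ⟨-1 / (3 * l1), by field_simp; ring⟩
  have hline : ∀ s : ℝ, ![1 / 3 + s * l1, s * l2, -1 + s * l3, s * l2] =
      ![1 / 3, 0, -1, 0] + s • ![l1, l2, l3, l2] := by
    intro s; ext i; fin_cases i <;> simp
  simp only [hline]
  obtain ⟨a, ha, b, hb, hWa, hWb⟩ := exists_neg_pos_wronskian_root l1 l2 l3 hl2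
  by_cases hdouble : eval ![l1, l2, l3, l2] a = 0 ∧ derivEval ![l1, l2, l3, l2] a = 0
  · refine exists_disc3_add_smul_eq_zero hWb fun hdouble' => hl2 ?_
    exact halfFlat_l2_eq_zero_of_double_roots (ha.trans hb).ne hdouble hdouble'
  · exact exists_disc3_add_smul_eq_zero hWa hdouble
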